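/- In the group G = ℤ/4ℤ × ℤ × ℤ with multiplication (x,y,z)·(m,n,k) = (x+m+2zn, y+n, z+k), the subsets S₁ = ℤ/4ℤ × 2ℤ × ℤ and S₂ = (2ℤ/4ℤ) × ℤ × 2ℤ are normal abelian subgroups, and for i ∈ {1,2}, the conjugacy class of (0,1,1) under S_i is exactly {(0,1,1), (2,1,1)}, a set of cardinality 2. -/
import Mathlib


/-- The twisted multiplication `(x,y,z)·(m,n,k) = (x + m + 2zn, y + n, z + k)`
on `ℤ/4ℤ × ℤ × ℤ`. -/
def gmul (a b : ZMod 4 × ℤ × ℤ) : ZMod 4 × ℤ × ℤ :=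
  (a.1 + b.1 + ((2 * a.2.2 * b.2.1 : ℤ) : ZMod 4), a.2.1 + b.2.1, a.2.2 + b.2.2)

/-- The inverse for the twisted multiplication. -/
def ginv (a : ZMod 4 × ℤ × ℤ) : ZMod 4 × ℤ × ℤ :=
  (-a.1 + ((2 * a.2.2 * a.2.1 : ℤ) : ZMod 4), -a.2.1, -a.2.2)

/-- `S₁ = ℤ/4ℤ × 2ℤ × ℤ`. -/
def S₁ : Set (ZMod 4 × ℤ × ℤ) := {a | 2 ∣ a.2.1}

/-- `S₂ = (2ℤ/4ℤ) × ℤ × 2ℤ`. -/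
def S₂ : Set (ZMod 4 × ℤ × ℤ) := {a | (a.1 = 0 ∨ a.1 = 2) ∧ 2 ∣ a.2.2}

lemma evenCast {n : ℤ} (h : 2 ∣ n) : ((2 * n : ℤ) : ZMod 4) = 0 := by
  obtain ⟨m, rfl⟩ := h
  push_cast
  ring_nf
  rw [show ((4:ZMod 4)) = 0 by decide, mul_zero]

lemma twoCast (n : ℤ) : ((2 * n : ℤ) : ZMod 4) = 0 ∨ ((2 * n : ℤ) : ZMod 4) = 2 := by
  rcases Int.even_or_odd n with ⟨m, rfl⟩ | ⟨m, rfl⟩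
  · left
    exact evenCast ⟨m, by ring⟩
  · right
    push_cast
    ring_nf
    rw [show ((4:ZMod 4)) = 0 by decide]
    ring

lemma conj_eq (s : ZMod 4 × ℤ × ℤ) :
    gmul (gmul s ((0 : ZMod 4), (1 : ℤ), (1 : ℤ))) (ginv s)
      = (((2 * (s.2.2 - s.2.1) : ℤ) : ZMod 4), 1, 1) := by
  obtain ⟨x, y, z⟩ := s
  simp only [gmul, ginv, Prod.mk.injEq]
  refine ⟨?_, by ring, by ring⟩
  push_cast
  ring

/-- `S₁` and `S₂` are normal abelian subgroups of the twisted group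
`G = ℤ/4ℤ × ℤ × ℤ`, and the `Sᵢ`-conjugacy class of `(0,1,1)` is exactly
`{(0,1,1), (2,1,1)}`, a set of cardinality 2. -/
theorem stmt16 :
    (∀ S ∈ [S₁, S₂],
      ((0, 0, 0) : ZMod 4 × ℤ × ℤ) ∈ S ∧
      (∀ a ∈ S, ∀ b ∈ S, gmul a b ∈ S) ∧
      (∀ a ∈ S, ginv a ∈ S) ∧
      (∀ a ∈ S, ∀ b ∈ S, gmul a b = gmul b a) ∧
      (∀ g : ZMod 4 × ℤ × ℤ, ∀ a ∈ S, gmul (gmul g a) (ginv g) ∈ S) ∧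
      {x | ∃ s ∈ S, x = gmul (gmul s ((0 : ZMod 4), (1 : ℤ), (1 : ℤ))) (ginv s)} =
        {((0 : ZMod 4), (1 : ℤ), (1 : ℤ)), ((2 : ZMod 4), (1 : ℤ), (1 : ℤ))} ∧
      Set.ncard {x | ∃ s ∈ S, x = gmul (gmul s ((0 : ZMod 4), (1 : ℤ), (1 : ℤ))) (ginv s)}
        = 2) := by
  have hne : (((0 : ZMod 4), (1 : ℤ), (1 : ℤ))) ≠ (((2 : ZMod 4), (1 : ℤ), (1 : ℤ))) := by
    intro h
    have := congrArg Prod.fst h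
    exact absurd this (by decide)
  intro S hS
  simp only [List.mem_cons, List.not_mem_nil, or_false] at hS
  rcases hS with rfl | rfl
  · -- S₁ case
    have key : {x | ∃ s ∈ S₁, x = gmul (gmul s ((0 : ZMod 4), (1 : ℤ), (1 : ℤ))) (ginv s)} =
        {((0 : ZMod 4), (1 : ℤ), (1 : ℤ)), ((2 : ZMod 4), (1 : ℤ), (1 : ℤ))} := by
      ext x
      simp only [Set.mem_setOf_eq, Set.mem_insert_iff, Set.mem_singleton_iff]
      constructor
      · rintro ⟨s, hs, rfl⟩
        rw [conj_eq]
        rcases twoCast (s.2.2 - s.2.1) with h | h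
        · left; rw [h]
        · right; rw [h]
      · rintro (rfl | rfl)
        · exact ⟨(0, 0, 0), ⟨0, rfl⟩, by rw [conj_eq]; norm_num⟩
        · exact ⟨(0, 0, 1), ⟨0, rfl⟩, by rw [conj_eq]; norm_num⟩
    refine ⟨⟨0, rfl⟩, ?_, ?_, ?_, ?_, key, by rw [key]; exact Set.ncard_pair hne⟩
    · rintro ⟨a1, a2, a3⟩ ha ⟨b1, b2, b3⟩ hb
      simp only [S₁, Set.mem_setOf_eq, gmul] at *
      omega
    · rintro ⟨a1, a2, a3⟩ ha
      simp only [S₁, Set.mem_setOf_eq, ginv] at *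
      omega
    · rintro ⟨a1, a2, a3⟩ ha ⟨b1, b2, b3⟩ hb
      simp only [S₁, Set.mem_setOf_eq] at ha hb
      simp only [gmul, Prod.mk.injEq]
      refine ⟨?_, by ring, by ring⟩
      rw [show (2 * a3 * b2 : ℤ) = 2 * (a3 * b2) by ring,
          show (2 * b3 * a2 : ℤ) = 2 * (b3 * a2) by ring,
          evenCast (Dvd.dvd.mul_left hb a3), evenCast (Dvd.dvd.mul_left ha b3)]
      ring
    · rintro ⟨g1, g2, g3⟩ ⟨a1, a2, a3⟩ ha
      simp only [S₁, Set.mem_setOf_eq, gmul, ginv] at *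
      omega
  · -- S₂ case
    have key : {x | ∃ s ∈ S₂, x = gmul (gmul s ((0 : ZMod 4), (1 : ℤ), (1 : ℤ))) (ginv s)} =
        {((0 : ZMod 4), (1 : ℤ), (1 : ℤ)), ((2 : ZMod 4), (1 : ℤ), (1 : ℤ))} := by
      ext x
      simp only [Set.mem_setOf_eq, Set.mem_insert_iff, Set.mem_singleton_iff]
      constructor
      · rintro ⟨s, hs, rfl⟩
        rw [conj_eq]
        rcases twoCast (s.2.2 - s.2.1) with h | h
        · left; rw [h]
        · right; rw [h]
      · rintro (rfl | rfl)
        · exact ⟨(0, 0, 0), ⟨Or.inl rfl, ⟨0, rfl⟩⟩, by rw [conj_eq]; norm_num⟩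
        · exact ⟨(0, 1, 0), ⟨Or.inl rfl, ⟨0, rfl⟩⟩, by rw [conj_eq]; norm_num; decide⟩
    refine ⟨⟨Or.inl rfl, ⟨0, rfl⟩⟩, ?_, ?_, ?_, ?_, key, by rw [key]; exact Set.ncard_pair hne⟩
    · rintro ⟨a1, a2, a3⟩ ⟨ha1, ha3⟩ ⟨b1, b2, b3⟩ ⟨hb1, hb3⟩
      simp only [S₂, Set.mem_setOf_eq, gmul] at *
      refine ⟨?_, by omega⟩
      rw [show (2 * a3 * b2 : ℤ) = 2 * (a3 * b2) by ring,
          evenCast (Dvd.dvd.mul_right ha3 b2), add_zero]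
      rcases ha1 with rfl | rfl <;> rcases hb1 with rfl | rfl <;> simp <;> decide
    · rintro ⟨a1, a2, a3⟩ ⟨ha1, ha3⟩
      simp only [S₂, Set.mem_setOf_eq, ginv] at *
      refine ⟨?_, by omega⟩
      rw [show (2 * a3 * a2 : ℤ) = 2 * (a3 * a2) by ring,
          evenCast (Dvd.dvd.mul_right ha3 a2), add_zero]
      rcases ha1 with rfl | rfl <;> simp <;> decide
    · rintro ⟨a1, a2, a3⟩ ⟨ha1, ha3⟩ ⟨b1, b2, b3⟩ ⟨hb1, hb3⟩
      simp only [gmul, Prod.mk.injEq]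
      refine ⟨?_, by ring, by ring⟩
      rw [show (2 * a3 * b2 : ℤ) = 2 * (a3 * b2) by ring,
          show (2 * b3 * a2 : ℤ) = 2 * (b3 * a2) by ring,
          evenCast (Dvd.dvd.mul_right ha3 b2), evenCast (Dvd.dvd.mul_right hb3 a2)]
      ring
    · rintro ⟨g1, g2, g3⟩ ⟨a1, a2, a3⟩ ⟨ha1, ha3⟩
      simp only [S₂, Set.mem_setOf_eq, gmul, ginv] at *
      refine ⟨?_, by omega⟩
      have e : (g1 + a1 + ((2 * g3 * a2 : ℤ) : ZMod 4) + (-g1 + ((2 * g3 * g2 : ℤ) : ZMod 4))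
          + ((2 * (g3 + a3) * (-g2) : ℤ) : ZMod 4))
          = a1 + ((2 * (g3 * a2 - a3 * g2) : ℤ) : ZMod 4) := by
        push_cast
        ring
      rw [e]
      rcases twoCast (g3 * a2 - a3 * g2) with h | h <;> rw [h] <;>
        rcases ha1 with rfl | rfl <;> simp <;> decide
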